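/- (Theorem 5.4, bivariate rate of convergence) Let n₁, n₂ ≥ 1 be natural numbers, 0 < q_i < p_i ≤ 1 (i = 1,2), and x, y ≥ 0. Set Δ_{n₁}(x) = (1/(p₁q₁))·L_{n₁}^{p₁,q₁}( (t/(1+t) − x/(1+x))²; x ) and Δ_{n₂}(y) = (1/(p₂q₂))·L_{n₂}^{p₂,q₂}( (s/(1+s) − y/(1+y))²; y ), where L_n^{p,q} is the univariate (p,q)-Bleimann–Butzer–Hahn operator. Then for every bivariate modulus of continuity ω₂ and every f ∈ H_{ω₂}, | L_{n₁,n₂}(f; p₁,p₂;q₁,q₂; x,y) − p₁q₁p₂q₂·f(x,y) | ≤ 4·ω̃( f; √(Δ_{n₁}(x)), √(Δ_{n₂}(y)) ). -/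

import Mathlib

open Finset Filter
open scoped Classical

noncomputable section

/-- The `(p,q)`-integer `[n]_{p,q} = (p^n - q^n)/(p - q)`. -/
def pqInt (p q : ℝ) (n : ℕ) : ℝ := (p ^ n - q ^ n) / (p - q)

/-- The `(p,q)`-factorial. -/
def pqFact (p q : ℝ) : ℕ → ℝ
  | 0 => 1
  | n + 1 => pqFact p q n * pqInt p q (n + 1)

/-- The `(p,q)`-binomial coefficient. -/
def pqBinom (p q : ℝ) (n k : ℕ) : ℝ :=
  pqFact p q n / (pqFact p q k * pqFact p q (n - k))

/-- `ℓ_n^{p,q}(x) = ∏_{s=0}^{n-1} (p^s + q^s x)`. -/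
def pqEll (p q : ℝ) (n : ℕ) (x : ℝ) : ℝ :=
  ∏ s ∈ Finset.range n, (p ^ s + q ^ s * x)

/-- The node `p^{n-k+1}[k]_{p,q} / ([n-k+1]_{p,q} q^k)`. -/
def pqNode (p q : ℝ) (n k : ℕ) : ℝ :=
  p ^ (n - k + 1) * pqInt p q k / (pqInt p q (n - k + 1) * q ^ k)

/-- The `(p,q)`-Bleimann–Butzer–Hahn operator. -/
def bbh (p q : ℝ) (n : ℕ) (f : ℝ → ℝ) (x : ℝ) : ℝ :=
  (p * q / pqEll p q n x) *
    ∑ k ∈ Finset.range (n + 1),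
      f (pqNode p q n k) * p ^ ((n - k) * (n - k - 1) / 2) *
        q ^ (k * (k - 1) / 2) * pqBinom p q n k * x ^ k

/-- `δ_n(x)` from Theorem 3.1. -/
def pqDelta (p q : ℝ) (n : ℕ) (x : ℝ) : ℝ :=
  (x / (1 + x)) ^ 2 *
      (p ^ 2 * q ^ 3 * pqInt p q n * pqInt p q (n - 1) / (pqInt p q (n + 1)) ^ 2 *
          ((1 + x) / (p + q * x)) -
        2 * p * q * pqInt p q n / pqInt p q (n + 1) + 1) +
    p ^ (n + 2) * q * pqInt p q n / (pqInt p q (n + 1)) ^ 2 * (x / (1 + x))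

/-- Statistical convergence of a real sequence. -/
def StatConv (a : ℕ → ℝ) (l : ℝ) : Prop :=
  ∀ ε > (0 : ℝ), Tendsto (fun n : ℕ =>
    (((Finset.range (n + 1)).filter (fun k => ε ≤ |a k - l|)).card : ℝ) / n)
    atTop (nhds 0)

/-- A modulus of continuity. -/
def IsModulus (ω : ℝ → ℝ) : Prop :=
  (∀ δ, 0 ≤ δ → 0 ≤ ω δ) ∧
  (∀ δ₁ δ₂, 0 ≤ δ₁ → δ₁ ≤ δ₂ → ω δ₁ ≤ ω δ₂) ∧
  (∀ δ₁ δ₂, 0 ≤ δ₁ → 0 ≤ δ₂ → ω (δ₁ + δ₂) ≤ ω δ₁ + ω δ₂) ∧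
  Tendsto ω (nhdsWithin 0 (Set.Ioi 0)) (nhds 0)

/-- Membership in the class `H_ω`. -/
def MemHomega (ω f : ℝ → ℝ) : Prop :=
  ∀ x y : ℝ, 0 ≤ x → 0 ≤ y → |f x - f y| ≤ ω |x / (1 + x) - y / (1 + y)|

/-- The modulus `ω̃(f; δ)`. -/
def omegaTilde (f : ℝ → ℝ) (δ : ℝ) : ℝ :=
  sSup {d | ∃ t x : ℝ, 0 ≤ t ∧ 0 ≤ x ∧ |t / (1 + t) - x / (1 + x)| ≤ δ ∧ d = |f t - f x|}

/-- The bivariate `(p,q)`-Bleimann–Butzer–Hahn operator. -/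
def bbh2 (p₁ p₂ q₁ q₂ : ℝ) (n₁ n₂ : ℕ) (f : ℝ → ℝ → ℝ) (x y : ℝ) : ℝ :=
  (p₁ * p₂ * q₁ * q₂ / (pqEll p₁ q₁ n₁ x * pqEll p₂ q₂ n₂ y)) *
    ∑ k₁ ∈ Finset.range (n₁ + 1), ∑ k₂ ∈ Finset.range (n₂ + 1),
      f (pqNode p₁ q₁ n₁ k₁) (pqNode p₂ q₂ n₂ k₂) *
        p₁ ^ ((n₁ - k₁) * (n₁ - k₁ - 1) / 2) * q₁ ^ (k₁ * (k₁ - 1) / 2) *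
        p₂ ^ ((n₂ - k₂) * (n₂ - k₂ - 1) / 2) * q₂ ^ (k₂ * (k₂ - 1) / 2) *
        pqBinom p₁ q₁ n₁ k₁ * pqBinom p₂ q₂ n₂ k₂ * x ^ k₁ * y ^ k₂

/-- Statistical convergence of a double real sequence (Pringsheim sense). -/
def StatConv2 (a : ℕ → ℕ → ℝ) (l : ℝ) : Prop :=
  ∀ ε > (0 : ℝ), Tendsto (fun N : ℕ × ℕ =>
    ((((Finset.range (N.1 + 1)) ×ˢ (Finset.range (N.2 + 1))).filter
        (fun jk => ε ≤ |a jk.1 jk.2 - l|)).card : ℝ) / (N.1 * N.2))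
    atTop (nhds 0)

/-- A bivariate modulus of continuity. -/
def IsModulus2 (ω : ℝ → ℝ → ℝ) : Prop :=
  (∀ a b, 0 ≤ a → 0 ≤ b → 0 ≤ ω a b) ∧
  (∀ a a' b, 0 ≤ a → a ≤ a' → 0 ≤ b → ω a b ≤ ω a' b) ∧
  (∀ a b b', 0 ≤ a → 0 ≤ b → b ≤ b' → ω a b ≤ ω a b') ∧
  (∀ a a' b, 0 ≤ a → 0 ≤ a' → 0 ≤ b → ω (a + a') b ≤ ω a b + ω a' b) ∧
  (∀ a b b', 0 ≤ a → 0 ≤ b → 0 ≤ b' → ω a (b + b') ≤ ω a b + ω a b') ∧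
  Tendsto (fun d : ℝ × ℝ => ω d.1 d.2)
    (nhdsWithin (0, 0) (Set.Ioi 0 ×ˢ Set.Ioi 0)) (nhds 0)

/-- Membership in the class `H_{ω₂}`. -/
def MemHomega2 (ω g : ℝ → ℝ → ℝ) : Prop :=
  ∀ u₁ v₁ u₂ v₂ : ℝ, 0 ≤ u₁ → 0 ≤ v₁ → 0 ≤ u₂ → 0 ≤ v₂ →
    |g u₁ v₁ - g u₂ v₂| ≤
      ω |u₁ / (1 + u₁) - u₂ / (1 + u₂)| |v₁ / (1 + v₁) - v₂ / (1 + v₂)|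

/-- The bivariate modulus `ω̃(g; δ₁, δ₂)`. -/
def omegaTilde2 (g : ℝ → ℝ → ℝ) (δ₁ δ₂ : ℝ) : ℝ :=
  sSup {d | ∃ t s x y : ℝ, 0 ≤ t ∧ 0 ≤ s ∧ 0 ≤ x ∧ 0 ≤ y ∧
    |t / (1 + t) - x / (1 + x)| ≤ δ₁ ∧ |s / (1 + s) - y / (1 + y)| ≤ δ₂ ∧
    d = |g t s - g x y|}

/-!
`bbh p q n` is a discrete positive functional `g ↦ ∑ₖ wₖ g(tₖ)` whose weights sum to `pq` by the
`(p,q)`-binomial theorem, and `bbh2` is the tensor product of two of them. Because `ω̃` measures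
distances in the coordinates `u / (1 + u)`, in which `[0, ∞)²` becomes the convex set `[0, 1)²`, it
scales like `ω̃(f; λδ₁, λδ₂) ≤ (1 + λ) ω̃(f; δ₁, δ₂)`. Take `δᵢ² = Δᵢ`, the weighted mean square
distances, and `λ = λ₁ + λ₂` with `λᵢ` the distance of a node over `δᵢ`: the pointwise factor
`1 + λ₁ + λ₂ ≤ 2 + (λ₁² + λ₂²) / 2` averages to at most `3`, and `p₁q₁p₂q₂ ≤ 1`.
-/

section PQCalculus

variable {p q : ℝ}

lemma pqInt_pos (hq : 0 < q) (hqp : q < p) {n : ℕ} (hn : n ≠ 0) : 0 < pqInt p q n :=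
  div_pos (sub_pos.2 (pow_lt_pow_left₀ hqp hq.le hn)) (sub_pos.2 hqp)

lemma pqInt_nonneg (hq : 0 ≤ q) (hqp : q < p) (n : ℕ) : 0 ≤ pqInt p q n :=
  div_nonneg (sub_nonneg.2 (pow_le_pow_left₀ hq hqp.le n)) (sub_nonneg.2 hqp.le)

lemma pqInt_add (hqp : q < p) (a b : ℕ) :
    pqInt p q (a + b) = p ^ a * pqInt p q b + q ^ b * pqInt p q a := by
  have : p - q ≠ 0 := (sub_pos.2 hqp).ne'
  simp only [pqInt]
  field_simp
  ring

lemma pqFact_pos (hq : 0 < q) (hqp : q < p) (n : ℕ) : 0 < pqFact p q n := by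
  induction n with
  | zero => exact one_pos
  | succ n ih => exact mul_pos ih (pqInt_pos hq hqp n.succ_ne_zero)

lemma pqBinom_pos (hq : 0 < q) (hqp : q < p) (n k : ℕ) : 0 < pqBinom p q n k :=
  div_pos (pqFact_pos hq hqp n) (mul_pos (pqFact_pos hq hqp k) (pqFact_pos hq hqp (n - k)))

lemma pqBinom_zero_right (hq : 0 < q) (hqp : q < p) (n : ℕ) : pqBinom p q n 0 = 1 := by
  simp [pqBinom, pqFact, (pqFact_pos hq hqp n).ne']

lemma pqBinom_self (hq : 0 < q) (hqp : q < p) (n : ℕ) : pqBinom p q n n = 1 := by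
  simp [pqBinom, pqFact, (pqFact_pos hq hqp n).ne']

lemma pqBinom_succ_succ (hq : 0 < q) (hqp : q < p) {n k : ℕ} (hk : k < n) :
    pqBinom p q (n + 1) (k + 1) =
      p ^ (k + 1) * pqBinom p q n (k + 1) + q ^ (n - k) * pqBinom p q n k := by
  obtain ⟨m, rfl⟩ : ∃ m, n = k + m + 1 := ⟨n - k - 1, by omega⟩
  have hsplit : pqInt p q (k + m + 1 + 1) =
      p ^ (k + 1) * pqInt p q (m + 1) + q ^ (m + 1) * pqInt p q (k + 1) := by
    rw [← pqInt_add hqp, show k + 1 + (m + 1) = k + m + 1 + 1 by omega]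
  have e₁ : k + m + 1 + 1 - (k + 1) = m + 1 := by omega
  have e₂ : k + m + 1 - (k + 1) = m := by omega
  have e₃ : k + m + 1 - k = m + 1 := by omega
  have := fun j => (pqFact_pos hq hqp j).ne'
  have := (pqInt_pos hq hqp m.add_one_ne_zero).ne'
  have := (pqInt_pos hq hqp k.add_one_ne_zero).ne'
  simp only [pqBinom, e₁, e₂, e₃, pqFact, hsplit]
  field_simp

end PQCalculus

def pqCoeff (p q : ℝ) (n k : ℕ) : ℝ :=
  p ^ ((n - k) * (n - k - 1) / 2) * q ^ (k * (k - 1) / 2) * pqBinom p q n k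

section PQBinomial

variable {p q : ℝ}

lemma pqCoeff_pos (hq : 0 < q) (hqp : q < p) (n k : ℕ) : 0 < pqCoeff p q n k :=
  mul_pos (mul_pos (pow_pos (hq.trans hqp) _) (pow_pos hq _)) (pqBinom_pos hq hqp n k)

lemma pqCoeff_succ_zero (hq : 0 < q) (hqp : q < p) (n : ℕ) :
    pqCoeff p q (n + 1) 0 = p ^ n * pqCoeff p q n 0 := by
  simp only [pqCoeff, pqBinom_zero_right hq hqp, Nat.sub_zero, Nat.triangle_succ, pow_add]
  ring

lemma pqCoeff_succ_self (hq : 0 < q) (hqp : q < p) (n : ℕ) :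
    pqCoeff p q (n + 1) (n + 1) = q ^ n * pqCoeff p q n n := by
  simp only [pqCoeff, pqBinom_self hq hqp, Nat.sub_self, Nat.triangle_succ, pow_add]
  ring

lemma pqCoeff_succ_succ (hq : 0 < q) (hqp : q < p) {n k : ℕ} (hk : k < n) :
    pqCoeff p q (n + 1) (k + 1) = p ^ n * pqCoeff p q n (k + 1) + q ^ n * pqCoeff p q n k := by
  obtain ⟨m, rfl⟩ : ∃ m, n = k + m + 1 := ⟨n - k - 1, by omega⟩
  have e₁ : k + m + 1 + 1 - (k + 1) = m + 1 := by omega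
  have e₂ : k + m + 1 - (k + 1) = m := by omega
  have e₃ : k + m + 1 - k = m + 1 := by omega
  have tri (j : ℕ) : (j + 1) * j / 2 = j * (j - 1) / 2 + j := Nat.triangle_succ j
  simp only [pqCoeff, pqBinom_succ_succ hq hqp hk, e₁, e₂, e₃, Nat.add_sub_cancel, tri, pow_add]
  ring

theorem sum_pqCoeff_mul_pow (hq : 0 < q) (hqp : q < p) (n : ℕ) (x : ℝ) :
    ∑ k ∈ range (n + 1), pqCoeff p q n k * x ^ k = pqEll p q n x := by
  induction n with
  | zero => simp [pqCoeff, pqEll, pqBinom, pqFact]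
  | succ n ih =>
    have hmid : ∑ k ∈ range n, pqCoeff p q (n + 1) (k + 1) * x ^ (k + 1) =
        p ^ n * ∑ k ∈ range n, pqCoeff p q n (k + 1) * x ^ (k + 1) +
          q ^ n * x * ∑ k ∈ range n, pqCoeff p q n k * x ^ k := by
      rw [mul_sum, mul_sum, ← sum_add_distrib]
      refine sum_congr rfl fun k hk => ?_
      rw [pqCoeff_succ_succ hq hqp (mem_range.1 hk)]
      ring
    calc ∑ k ∈ range (n + 1 + 1), pqCoeff p q (n + 1) k * x ^ k
        = pqCoeff p q (n + 1) 0 + ∑ k ∈ range n, pqCoeff p q (n + 1) (k + 1) * x ^ (k + 1) +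
            pqCoeff p q (n + 1) (n + 1) * x ^ (n + 1) := by
          rw [sum_range_succ', sum_range_succ]
          ring
      _ = p ^ n * (∑ k ∈ range n, pqCoeff p q n (k + 1) * x ^ (k + 1) + pqCoeff p q n 0 * x ^ 0) +
            q ^ n * x * (∑ k ∈ range n, pqCoeff p q n k * x ^ k + pqCoeff p q n n * x ^ n) := by
          rw [hmid, pqCoeff_succ_zero hq hqp, pqCoeff_succ_self hq hqp]
          ring
      _ = pqEll p q (n + 1) x := by
          rw [← sum_range_succ' (fun k => pqCoeff p q n k * x ^ k),
            ← sum_range_succ (fun k => pqCoeff p q n k * x ^ k), ih, pqEll, pqEll,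
            prod_range_succ]
          ring

end PQBinomial

def bbhWeight (p q : ℝ) (n : ℕ) (x : ℝ) (k : ℕ) : ℝ :=
  p * q / pqEll p q n x * (pqCoeff p q n k * x ^ k)

section Weights

variable {p q : ℝ}

lemma pqEll_pos (hq : 0 < q) (hqp : q < p) {x : ℝ} (hx : 0 ≤ x) (n : ℕ) : 0 < pqEll p q n x :=
  prod_pos fun s _ => add_pos_of_pos_of_nonneg (pow_pos (hq.trans hqp) s) (by positivity)

lemma bbhWeight_nonneg (hq : 0 < q) (hqp : q < p) {x : ℝ} (hx : 0 ≤ x) (n k : ℕ) :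
    0 ≤ bbhWeight p q n x k := by
  have := pqEll_pos hq hqp hx n
  have := pqCoeff_pos hq hqp n k
  have := (hq.trans hqp).le
  unfold bbhWeight
  positivity

lemma sum_bbhWeight (hq : 0 < q) (hqp : q < p) {x : ℝ} (hx : 0 ≤ x) (n : ℕ) :
    ∑ k ∈ range (n + 1), bbhWeight p q n x k = p * q := by
  simp only [bbhWeight]
  rw [← mul_sum, sum_pqCoeff_mul_pow hq hqp, div_mul_cancel₀ _ (pqEll_pos hq hqp hx n).ne']

lemma pqNode_nonneg (hq : 0 < q) (hqp : q < p) (n k : ℕ) : 0 ≤ pqNode p q n k :=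
  have hp := (hq.trans hqp).le
  div_nonneg (mul_nonneg (pow_nonneg hp _) (pqInt_nonneg hq.le hqp k))
    (mul_nonneg (pqInt_nonneg hq.le hqp _) (pow_nonneg hq.le _))

end Weights

lemma bbh_eq_sum (p q : ℝ) (n : ℕ) (f : ℝ → ℝ) (x : ℝ) :
    bbh p q n f x = ∑ k ∈ range (n + 1), bbhWeight p q n x k * f (pqNode p q n k) := by
  rw [bbh, mul_sum]
  exact sum_congr rfl fun k _ => by rw [bbhWeight, pqCoeff]; ring

lemma bbh2_eq_sum (p₁ p₂ q₁ q₂ : ℝ) (n₁ n₂ : ℕ) (f : ℝ → ℝ → ℝ) (x y : ℝ) :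
    bbh2 p₁ p₂ q₁ q₂ n₁ n₂ f x y = ∑ k₁ ∈ range (n₁ + 1), ∑ k₂ ∈ range (n₂ + 1),
      bbhWeight p₁ q₁ n₁ x k₁ * bbhWeight p₂ q₂ n₂ y k₂ *
        f (pqNode p₁ q₁ n₁ k₁) (pqNode p₂ q₂ n₂ k₂) := by
  rw [bbh2, mul_sum]
  refine sum_congr rfl fun k₁ _ => ?_
  rw [mul_sum]
  refine sum_congr rfl fun k₂ _ => ?_
  simp only [bbhWeight, pqCoeff]
  ring

lemma div_one_add_mem_Ico {u : ℝ} (hu : 0 ≤ u) : u / (1 + u) ∈ Set.Ico 0 1 :=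
  ⟨by positivity, (div_lt_one (by linarith)).2 (by linarith)⟩

lemma div_one_sub_nonneg {v : ℝ} (hv : v ∈ Set.Ico 0 1) : 0 ≤ v / (1 - v) :=
  div_nonneg hv.1 (sub_nonneg.2 hv.2.le)

lemma div_one_add_div_one_sub {v : ℝ} (hv : v ∈ Set.Ico 0 1) :
    v / (1 - v) / (1 + v / (1 - v)) = v := by
  have : 1 - v ≠ 0 := (sub_pos.2 hv.2).ne'
  field_simp
  ring

lemma div_one_sub_div_one_add {u : ℝ} (hu : 0 ≤ u) : u / (1 + u) / (1 - u / (1 + u)) = u := by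
  have : 1 + u ≠ 0 := by positivity
  field_simp
  ring

lemma abs_sub_le_one_of_mem_Ico {a b : ℝ} (ha : a ∈ Set.Ico 0 1) (hb : b ∈ Set.Ico 0 1) :
    |a - b| ≤ 1 :=
  abs_sub_le_iff.2 ⟨by linarith [ha.2, hb.1], by linarith [ha.1, hb.2]⟩

section OmegaTilde

variable {ω f : ℝ → ℝ → ℝ}

lemma abs_sub_le_omegaTilde2 (hω : IsModulus2 ω) (hf : MemHomega2 ω f) {δ₁ δ₂ t s x y : ℝ}
    (ht : 0 ≤ t) (hs : 0 ≤ s) (hx : 0 ≤ x) (hy : 0 ≤ y)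
    (h₁ : |t / (1 + t) - x / (1 + x)| ≤ δ₁) (h₂ : |s / (1 + s) - y / (1 + y)| ≤ δ₂) :
    |f t s - f x y| ≤ omegaTilde2 f δ₁ δ₂ := by
  refine le_csSup ⟨ω 1 1, ?_⟩ ⟨t, s, x, y, ht, hs, hx, hy, h₁, h₂, rfl⟩
  rintro _ ⟨t, s, x, y, ht, hs, hx, hy, -, -, rfl⟩
  have hΔ₁ := abs_sub_le_one_of_mem_Ico (div_one_add_mem_Ico ht) (div_one_add_mem_Ico hx)
  have hΔ₂ := abs_sub_le_one_of_mem_Ico (div_one_add_mem_Ico hs) (div_one_add_mem_Ico hy)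
  calc |f t s - f x y| ≤ ω |t / (1 + t) - x / (1 + x)| |s / (1 + s) - y / (1 + y)| :=
        hf t s x y ht hs hx hy
    _ ≤ ω 1 |s / (1 + s) - y / (1 + y)| := hω.2.1 _ _ _ (abs_nonneg _) hΔ₁ (abs_nonneg _)
    _ ≤ ω 1 1 := hω.2.2.1 _ _ _ zero_le_one (abs_nonneg _) hΔ₂

lemma omegaTilde2_nonneg (hω : IsModulus2 ω) (hf : MemHomega2 ω f) {δ₁ δ₂ : ℝ}
    (hδ₁ : 0 ≤ δ₁) (hδ₂ : 0 ≤ δ₂) : 0 ≤ omegaTilde2 f δ₁ δ₂ := by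
  simpa using abs_sub_le_omegaTilde2 hω hf le_rfl le_rfl le_rfl le_rfl
    (by simpa using hδ₁) (by simpa using hδ₂)

lemma abs_sub_le_omegaTilde2_of_mem_Ico (hω : IsModulus2 ω) (hf : MemHomega2 ω f)
    {δ₁ δ₂ a a' b b' : ℝ} (ha : a ∈ Set.Ico 0 1) (ha' : a' ∈ Set.Ico 0 1)
    (hb : b ∈ Set.Ico 0 1) (hb' : b' ∈ Set.Ico 0 1) (h₁ : |a - a'| ≤ δ₁) (h₂ : |b - b'| ≤ δ₂) :
    |f (a / (1 - a)) (b / (1 - b)) - f (a' / (1 - a')) (b' / (1 - b'))| ≤ omegaTilde2 f δ₁ δ₂ :=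
  abs_sub_le_omegaTilde2 hω hf (div_one_sub_nonneg ha) (div_one_sub_nonneg hb)
    (div_one_sub_nonneg ha') (div_one_sub_nonneg hb')
    (by rwa [div_one_add_div_one_sub ha, div_one_add_div_one_sub ha'])
    (by rwa [div_one_add_div_one_sub hb, div_one_add_div_one_sub hb'])

/-- Split the segment from `(x, y)` to `(t, s)`, taken in the coordinates `u / (1 + u)`, into `N`
equal steps and telescope. -/
lemma abs_sub_le_nat_mul_omegaTilde2 (hω : IsModulus2 ω) (hf : MemHomega2 ω f)
    {δ₁ δ₂ t s x y : ℝ} (ht : 0 ≤ t) (hs : 0 ≤ s) (hx : 0 ≤ x) (hy : 0 ≤ y)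
    {N : ℕ} (hN : N ≠ 0)
    (h₁ : |t / (1 + t) - x / (1 + x)| ≤ N * δ₁) (h₂ : |s / (1 + s) - y / (1 + y)| ≤ N * δ₂) :
    |f t s - f x y| ≤ N * omegaTilde2 f δ₁ δ₂ := by
  have hN₀ : (0 : ℝ) < N := by positivity
  set T := t / (1 + t)
  set X := x / (1 + x)
  set S := s / (1 + s)
  set Y := y / (1 + y)
  set a : ℕ → ℝ := fun i => X + (i / N : ℝ) * (T - X)
  set b : ℕ → ℝ := fun i => Y + (i / N : ℝ) * (S - Y)
  have hmem {U V : ℝ} (hU : U ∈ Set.Ico 0 1) (hV : V ∈ Set.Ico 0 1) {i : ℕ} (hi : i ≤ N) :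
      U + (i / N : ℝ) * (V - U) ∈ Set.Ico 0 1 :=
    (convex_Ico (0 : ℝ) 1).add_smul_sub_mem hU hV
      ⟨by positivity, (div_le_one hN₀).2 (by exact_mod_cast hi)⟩
  have hstep (U V : ℝ) (i : ℕ) :
      U + ((i + 1 : ℕ) / N : ℝ) * (V - U) - (U + (i / N : ℝ) * (V - U)) = (V - U) / N := by
    push_cast
    ring
  have hT := div_one_add_mem_Ico ht
  have hX := div_one_add_mem_Ico hx
  have hS := div_one_add_mem_Ico hs
  have hY := div_one_add_mem_Ico hy
  set c : ℕ → ℝ := fun i => f (a i / (1 - a i)) (b i / (1 - b i))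
  have hc₀ : c 0 = f x y := by
    simp [c, a, b, X, Y, div_one_sub_div_one_add hx, div_one_sub_div_one_add hy]
  have hcN : c N = f t s := by
    simp [c, a, b, div_self hN₀.ne', T, S, div_one_sub_div_one_add ht, div_one_sub_div_one_add hs]
  have hc (i : ℕ) (hi : i ∈ range N) : |c (i + 1) - c i| ≤ omegaTilde2 f δ₁ δ₂ := by
    have hi' := mem_range.1 hi
    refine abs_sub_le_omegaTilde2_of_mem_Ico hω hf (hmem hX hT hi') (hmem hX hT hi'.le)
      (hmem hY hS hi') (hmem hY hS hi'.le) ?_ ?_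
    · rw [hstep, abs_div, abs_of_pos hN₀, div_le_iff₀' hN₀]; exact h₁
    · rw [hstep, abs_div, abs_of_pos hN₀, div_le_iff₀' hN₀]; exact h₂
  calc |f t s - f x y| = |∑ i ∈ range N, (c (i + 1) - c i)| := by rw [sum_range_sub, hc₀, hcN]
    _ ≤ ∑ i ∈ range N, |c (i + 1) - c i| := abs_sum_le_sum_abs _ _
    _ ≤ ∑ _i ∈ range N, omegaTilde2 f δ₁ δ₂ := sum_le_sum hc
    _ = N * omegaTilde2 f δ₁ δ₂ := by rw [sum_const, card_range, nsmul_eq_mul]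

lemma abs_sub_le_one_add_mul_omegaTilde2 (hω : IsModulus2 ω) (hf : MemHomega2 ω f)
    {δ₁ δ₂ l t s x y : ℝ} (hδ₁ : 0 ≤ δ₁) (hδ₂ : 0 ≤ δ₂) (hl : 0 ≤ l)
    (ht : 0 ≤ t) (hs : 0 ≤ s) (hx : 0 ≤ x) (hy : 0 ≤ y)
    (h₁ : |t / (1 + t) - x / (1 + x)| ≤ l * δ₁) (h₂ : |s / (1 + s) - y / (1 + y)| ≤ l * δ₂) :
    |f t s - f x y| ≤ (1 + l) * omegaTilde2 f δ₁ δ₂ := by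
  set N := max ⌈l⌉₊ 1
  have hlN : l ≤ N := (Nat.le_ceil l).trans (by exact_mod_cast le_max_left _ _)
  have hNl : (N : ℝ) ≤ 1 + l := by
    simp only [N, Nat.cast_max, Nat.cast_one]
    exact max_le (by linarith [Nat.ceil_lt_add_one hl]) (by linarith)
  calc |f t s - f x y| ≤ N * omegaTilde2 f δ₁ δ₂ :=
        abs_sub_le_nat_mul_omegaTilde2 hω hf ht hs hx hy (by positivity)
          (h₁.trans (mul_le_mul_of_nonneg_right hlN hδ₁))
          (h₂.trans (mul_le_mul_of_nonneg_right hlN hδ₂))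
    _ ≤ (1 + l) * omegaTilde2 f δ₁ δ₂ :=
        mul_le_mul_of_nonneg_right hNl (omegaTilde2_nonneg hω hf hδ₁ hδ₂)

/-- If `Dᵢ = 0` the hypothesis makes the numerator `0`, and the junk value `0 / 0 = 0` is the
right one. -/
lemma abs_sub_le_omegaTilde2_sqrt (hω : IsModulus2 ω) (hf : MemHomega2 ω f)
    {D₁ D₂ t s x y : ℝ} (hD₁ : 0 ≤ D₁) (hD₂ : 0 ≤ D₂)
    (ht : 0 ≤ t) (hs : 0 ≤ s) (hx : 0 ≤ x) (hy : 0 ≤ y)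
    (h₁ : D₁ = 0 → t / (1 + t) = x / (1 + x)) (h₂ : D₂ = 0 → s / (1 + s) = y / (1 + y)) :
    |f t s - f x y| ≤
      (2 + (t / (1 + t) - x / (1 + x)) ^ 2 / (2 * D₁) +
        (s / (1 + s) - y / (1 + y)) ^ 2 / (2 * D₂)) * omegaTilde2 f (√D₁) (√D₂) := by
  set Δ₁ := |t / (1 + t) - x / (1 + x)|
  set Δ₂ := |s / (1 + s) - y / (1 + y)|
  have hΔ₁ : Δ₁ / √D₁ * √D₁ = Δ₁ :=
    div_mul_cancel_of_imp fun h => by simp [Δ₁, h₁ (Real.sqrt_eq_zero hD₁ |>.1 h)]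
  have hΔ₂ : Δ₂ / √D₂ * √D₂ = Δ₂ :=
    div_mul_cancel_of_imp fun h => by simp [Δ₂, h₂ (Real.sqrt_eq_zero hD₂ |>.1 h)]
  have hr₁ : 0 ≤ Δ₁ / √D₁ := by positivity
  have hr₂ : 0 ≤ Δ₂ / √D₂ := by positivity
  have hsq₁ : (t / (1 + t) - x / (1 + x)) ^ 2 / (2 * D₁) = (Δ₁ / √D₁) ^ 2 / 2 := by
    rw [div_pow, Real.sq_sqrt hD₁, sq_abs]; ring
  have hsq₂ : (s / (1 + s) - y / (1 + y)) ^ 2 / (2 * D₂) = (Δ₂ / √D₂) ^ 2 / 2 := by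
    rw [div_pow, Real.sq_sqrt hD₂, sq_abs]; ring
  calc |f t s - f x y| ≤ (1 + (Δ₁ / √D₁ + Δ₂ / √D₂)) * omegaTilde2 f (√D₁) (√D₂) := by
        refine abs_sub_le_one_add_mul_omegaTilde2 hω hf (Real.sqrt_nonneg _) (Real.sqrt_nonneg _)
          (by positivity) ht hs hx hy ?_ ?_
        · exact hΔ₁.symm.le.trans
            (mul_le_mul_of_nonneg_right (le_add_of_nonneg_right hr₂) (Real.sqrt_nonneg _))
        · exact hΔ₂.symm.le.trans
            (mul_le_mul_of_nonneg_right (le_add_of_nonneg_left hr₁) (Real.sqrt_nonneg _))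
    _ ≤ _ := by
        rw [hsq₁, hsq₂]
        refine mul_le_mul_of_nonneg_right ?_
          (omegaTilde2_nonneg hω hf (Real.sqrt_nonneg _) (Real.sqrt_nonneg _))
        nlinarith [sq_nonneg (Δ₁ / √D₁ - 1), sq_nonneg (Δ₂ / √D₂ - 1)]

end OmegaTilde

lemma eq_zero_of_sum_mul_sq_div_sum_eq_zero {ι : Type*} {S : Finset ι} {w a : ι → ℝ}
    (hw : ∀ i ∈ S, 0 ≤ w i) {i : ι} (hi : i ∈ S) (hwi : w i ≠ 0)
    (h : (∑ j ∈ S, w j * a j ^ 2) / ∑ j ∈ S, w j = 0) : a i = 0 := by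
  rcases div_eq_zero_iff.1 h with h | h
  · have := (sum_eq_zero_iff_of_nonneg fun j hj => mul_nonneg (hw j hj) (sq_nonneg (a j))).1 h i hi
    simpa [hwi] using this
  · exact absurd ((sum_eq_zero_iff_of_nonneg hw).1 h i hi) hwi

lemma div_div_self_le {M W : ℝ} (hW : 0 ≤ W) : M / (M / W) ≤ W := by
  rcases eq_or_ne M 0 with h | h
  · simpa [h] using hW
  · rw [div_div_cancel₀ h]

section WeightedEstimate

variable {ι κ : Type*} {ω f : ℝ → ℝ → ℝ}

theorem abs_sum_sum_mul_sub_le (hω : IsModulus2 ω) (hf : MemHomega2 ω f)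
    (S : Finset ι) (R : Finset κ) {w₁ t : ι → ℝ} {w₂ s : κ → ℝ} {x y : ℝ}
    (hw₁ : ∀ i ∈ S, 0 ≤ w₁ i) (hw₂ : ∀ j ∈ R, 0 ≤ w₂ j)
    (ht : ∀ i ∈ S, 0 ≤ t i) (hs : ∀ j ∈ R, 0 ≤ s j) (hx : 0 ≤ x) (hy : 0 ≤ y) :
    |∑ i ∈ S, ∑ j ∈ R, w₁ i * w₂ j * (f (t i) (s j) - f x y)| ≤
      3 * ((∑ i ∈ S, w₁ i) * ∑ j ∈ R, w₂ j) * omegaTilde2 f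
        (√((∑ i ∈ S, w₁ i * (t i / (1 + t i) - x / (1 + x)) ^ 2) / ∑ i ∈ S, w₁ i))
        (√((∑ j ∈ R, w₂ j * (s j / (1 + s j) - y / (1 + y)) ^ 2) / ∑ j ∈ R, w₂ j)) := by
  set W₁ := ∑ i ∈ S, w₁ i
  set W₂ := ∑ j ∈ R, w₂ j
  set a : ι → ℝ := fun i => t i / (1 + t i) - x / (1 + x)
  set b : κ → ℝ := fun j => s j / (1 + s j) - y / (1 + y)
  set D₁ := (∑ i ∈ S, w₁ i * a i ^ 2) / W₁
  set D₂ := (∑ j ∈ R, w₂ j * b j ^ 2) / W₂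
  set Ω := omegaTilde2 f (√D₁) (√D₂)
  have hW₁ : 0 ≤ W₁ := sum_nonneg hw₁
  have hW₂ : 0 ≤ W₂ := sum_nonneg hw₂
  have hD₁ : 0 ≤ D₁ := div_nonneg (sum_nonneg fun i hi => mul_nonneg (hw₁ i hi) (sq_nonneg _)) hW₁
  have hD₂ : 0 ≤ D₂ := div_nonneg (sum_nonneg fun j hj => mul_nonneg (hw₂ j hj) (sq_nonneg _)) hW₂
  have hterm (i : ι) (hi : i ∈ S) (j : κ) (hj : j ∈ R) :
      |w₁ i * w₂ j * (f (t i) (s j) - f x y)| ≤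
        w₁ i * w₂ j * ((2 + a i ^ 2 / (2 * D₁) + b j ^ 2 / (2 * D₂)) * Ω) := by
    rw [abs_mul, abs_of_nonneg (mul_nonneg (hw₁ i hi) (hw₂ j hj))]
    rcases eq_or_ne (w₁ i) 0 with h₁ | h₁
    · simp [h₁]
    rcases eq_or_ne (w₂ j) 0 with h₂ | h₂
    · simp [h₂]
    refine mul_le_mul_of_nonneg_left ?_ (mul_nonneg (hw₁ i hi) (hw₂ j hj))
    exact abs_sub_le_omegaTilde2_sqrt hω hf hD₁ hD₂ (ht i hi) (hs j hj) hx hy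
      (fun h => sub_eq_zero.1 (eq_zero_of_sum_mul_sq_div_sum_eq_zero hw₁ hi h₁ h))
      (fun h => sub_eq_zero.1 (eq_zero_of_sum_mul_sq_div_sum_eq_zero hw₂ hj h₂ h))
  have hsum : ∑ i ∈ S, ∑ j ∈ R, w₁ i * w₂ j * ((2 + a i ^ 2 / (2 * D₁) + b j ^ 2 / (2 * D₂)) * Ω) =
      (2 * W₁ * W₂ + (∑ i ∈ S, w₁ i * a i ^ 2) / D₁ / 2 * W₂ +
        W₁ * ((∑ j ∈ R, w₂ j * b j ^ 2) / D₂ / 2)) * Ω := by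
    have hsplit (i : ι) (j : κ) :
        w₁ i * w₂ j * ((2 + a i ^ 2 / (2 * D₁) + b j ^ 2 / (2 * D₂)) * Ω) =
          w₁ i * w₂ j * (2 * Ω) + w₁ i * a i ^ 2 * w₂ j * (Ω / (2 * D₁)) +
            w₁ i * (w₂ j * b j ^ 2) * (Ω / (2 * D₂)) := by
      ring
    simp only [hsplit, sum_add_distrib, ← sum_mul, ← sum_mul_sum]
    ring
  calc _ ≤ ∑ i ∈ S, ∑ j ∈ R, |w₁ i * w₂ j * (f (t i) (s j) - f x y)| :=
        (abs_sum_le_sum_abs _ _).trans (sum_le_sum fun i _ => abs_sum_le_sum_abs _ _)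
    _ ≤ _ := sum_le_sum fun i hi => sum_le_sum fun j hj => hterm i hi j hj
    _ = _ := hsum
    _ ≤ (2 * W₁ * W₂ + W₁ / 2 * W₂ + W₁ * (W₂ / 2)) * Ω := by
        gcongr
        · exact omegaTilde2_nonneg hω hf (Real.sqrt_nonneg _) (Real.sqrt_nonneg _)
        · exact div_div_self_le hW₁
        · exact div_div_self_le hW₂
    _ = 3 * (W₁ * W₂) * Ω := by ring

end WeightedEstimate

lemma one_div_mul_bbh_eq {p q : ℝ} (hq : 0 < q) (hqp : q < p) {x : ℝ} (hx : 0 ≤ x) (n : ℕ)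
    (g : ℝ → ℝ) :
    1 / (p * q) * bbh p q n g x =
      (∑ k ∈ range (n + 1), bbhWeight p q n x k * g (pqNode p q n k)) /
        ∑ k ∈ range (n + 1), bbhWeight p q n x k := by
  rw [bbh_eq_sum, sum_bbhWeight hq hqp hx, one_div_mul_eq_div]

lemma bbh2_sub_eq_sum {p₁ p₂ q₁ q₂ x y : ℝ} (hq₁ : 0 < q₁) (hqp₁ : q₁ < p₁) (hq₂ : 0 < q₂)
    (hqp₂ : q₂ < p₂) (hx : 0 ≤ x) (hy : 0 ≤ y) (n₁ n₂ : ℕ) (f : ℝ → ℝ → ℝ) :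
    bbh2 p₁ p₂ q₁ q₂ n₁ n₂ f x y - p₁ * q₁ * p₂ * q₂ * f x y =
      ∑ k₁ ∈ range (n₁ + 1), ∑ k₂ ∈ range (n₂ + 1),
        bbhWeight p₁ q₁ n₁ x k₁ * bbhWeight p₂ q₂ n₂ y k₂ *
          (f (pqNode p₁ q₁ n₁ k₁) (pqNode p₂ q₂ n₂ k₂) - f x y) := by
  simp only [bbh2_eq_sum, mul_sub, sum_sub_distrib, ← sum_mul, ← sum_mul_sum,
    sum_bbhWeight hq₁ hqp₁ hx, sum_bbhWeight hq₂ hqp₂ hy]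
  ring

theorem bbh2_rate_of_convergence_general (n₁ n₂ : ℕ)
    (p₁ p₂ q₁ q₂ : ℝ)
    (hq₁ : 0 < q₁) (hqp₁ : q₁ < p₁) (hp₁ : p₁ ≤ 1)
    (hq₂ : 0 < q₂) (hqp₂ : q₂ < p₂) (hp₂ : p₂ ≤ 1)
    (ω : ℝ → ℝ → ℝ) (hω : IsModulus2 ω)
    (f : ℝ → ℝ → ℝ) (hf : MemHomega2 ω f)
    (x y : ℝ) (hx : 0 ≤ x) (hy : 0 ≤ y) :
    |bbh2 p₁ p₂ q₁ q₂ n₁ n₂ f x y - p₁ * q₁ * p₂ * q₂ * f x y| ≤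
      4 * omegaTilde2 f
        (Real.sqrt ((1 / (p₁ * q₁)) *
          bbh p₁ q₁ n₁ (fun t => (t / (1 + t) - x / (1 + x)) ^ 2) x))
        (Real.sqrt ((1 / (p₂ * q₂)) *
          bbh p₂ q₂ n₂ (fun s => (s / (1 + s) - y / (1 + y)) ^ 2) y)) := by
  have hpq₁ : p₁ * q₁ ≤ 1 := mul_le_one₀ hp₁ hq₁.le (hqp₁.le.trans hp₁)
  have hpq₂ : p₂ * q₂ ≤ 1 := mul_le_one₀ hp₂ hq₂.le (hqp₂.le.trans hp₂)
  have hP : 3 * (p₁ * q₁ * (p₂ * q₂)) ≤ 4 := by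
    linarith [mul_le_one₀ hpq₁ (mul_pos (hq₂.trans hqp₂) hq₂).le hpq₂]
  rw [bbh2_sub_eq_sum hq₁ hqp₁ hq₂ hqp₂ hx hy, one_div_mul_bbh_eq hq₁ hqp₁ hx,
    one_div_mul_bbh_eq hq₂ hqp₂ hy]
  refine (abs_sum_sum_mul_sub_le hω hf _ _ (fun k _ => bbhWeight_nonneg hq₁ hqp₁ hx n₁ k)
    (fun k _ => bbhWeight_nonneg hq₂ hqp₂ hy n₂ k) (fun k _ => pqNode_nonneg hq₁ hqp₁ n₁ k)
    (fun k _ => pqNode_nonneg hq₂ hqp₂ n₂ k) hx hy).trans ?_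
  rw [sum_bbhWeight hq₁ hqp₁ hx, sum_bbhWeight hq₂ hqp₂ hy]
  exact mul_le_mul_of_nonneg_right hP
    (omegaTilde2_nonneg hω hf (Real.sqrt_nonneg _) (Real.sqrt_nonneg _))

/-- Theorem 5.4, bivariate rate of convergence. -/
theorem bbh2_rate_of_convergence (n₁ n₂ : ℕ) (hn₁ : 1 ≤ n₁) (hn₂ : 1 ≤ n₂)
    (p₁ p₂ q₁ q₂ : ℝ)
    (hq₁ : 0 < q₁) (hqp₁ : q₁ < p₁) (hp₁ : p₁ ≤ 1)
    (hq₂ : 0 < q₂) (hqp₂ : q₂ < p₂) (hp₂ : p₂ ≤ 1)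
    (ω : ℝ → ℝ → ℝ) (hω : IsModulus2 ω)
    (f : ℝ → ℝ → ℝ) (hf : MemHomega2 ω f)
    (x y : ℝ) (hx : 0 ≤ x) (hy : 0 ≤ y) :
    |bbh2 p₁ p₂ q₁ q₂ n₁ n₂ f x y - p₁ * q₁ * p₂ * q₂ * f x y| ≤
      4 * omegaTilde2 f
        (Real.sqrt ((1 / (p₁ * q₁)) *
          bbh p₁ q₁ n₁ (fun t => (t / (1 + t) - x / (1 + x)) ^ 2) x))
        (Real.sqrt ((1 / (p₂ * q₂)) *
          bbh p₂ q₂ n₂ (fun s => (s / (1 + s) - y / (1 + y)) ^ 2) y)) :=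
  bbh2_rate_of_convergence_general n₁ n₂ p₁ p₂ q₁ q₂ hq₁ hqp₁ hp₁ hq₂ hqp₂ hp₂ ω hω f hf x y hx hy
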